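/- arXiv:2204.01511 — 3 statements merged into one kernel-verified Lean document; each statement's English description precedes it below -/
import Mathlib

section
/- Let λ ∈ ℂ with |λ| < 1, let m ∈ ℕ, and let (α_{m,k})_{k≥0} be the Taylor coefficients at 0 of the function z ↦ ((z+λ)/(1+conj(λ)z))^m, which is analytic on the disk |z| < 1/|λ| (interpreted as all of ℂ if λ = 0). Then for every a > 0, the sum ∑_{k=0}^∞ |α_{m,k}|² e^{-2ak} ≤ M^m, where M = (|λ| + e^{-2a})/(1 + e^{-2a}|λ|). -/
/-!
With `r = e^{-a}`, the numbers `c k = α k r^k` are the Taylor coefficients of `w ↦ B(r w)^m`,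
which is bounded by `M_r^m`, `M_r = (|λ| + r)/(1 + |λ| r)`, on the unit circle. Bessel's inequality
(Parseval for the partial sums, which are polynomials, plus the uniform smallness of the tails)
gives `∑ |c k|² ≤ M_r^{2m}`, and `M_r² ≤ M_{r²}` finishes the proof.
-/

open Complex ComplexConjugate Filter Topology Polynomial

theorem add_div_one_add_mul_sq_le {t r : ℝ} (ht0 : 0 ≤ t) (ht1 : t ≤ 1) (hr0 : 0 ≤ r)
    (hr1 : r ≤ 1) : ((t + r) / (1 + t * r)) ^ 2 ≤ (t + r ^ 2) / (1 + r ^ 2 * t) := by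
  rw [div_pow, div_le_div_iff₀ (by positivity) (by positivity)]
  -- `(t + r²)(1 + t r)² - (t + r)²(1 + r² t) = t (1 - t) (1 - r)² (1 - r²)`
  have hgap : 0 ≤ t * (1 - t) * (1 - r) ^ 2 * (1 - r ^ 2) := by
    have : 0 ≤ 1 - r ^ 2 := by nlinarith
    have : 0 ≤ 1 - t := by linarith
    positivity
  nlinarith [hgap]

theorem norm_add_div_one_add_conj_mul_le {l z : ℂ} (hl : ‖l‖ ≤ 1) (hz : ‖z‖ ≤ 1) :
    ‖(z + l) / (1 + conj l * z)‖ ≤ (‖l‖ + ‖z‖) / (1 + ‖l‖ * ‖z‖) := by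
  rcases eq_or_ne (1 + conj l * z) 0 with hden | hden
  · rw [hden, div_zero, norm_zero]
    positivity
  rw [norm_div, div_le_div_iff₀ (norm_pos_iff.2 hden) (by positivity)]
  set u := (conj l * z).re
  have hnum : ‖z + l‖ ^ 2 = ‖z‖ ^ 2 + 2 * u + ‖l‖ ^ 2 := by
    rw [Complex.sq_norm, normSq_add, normSq_eq_norm_sq, normSq_eq_norm_sq, mul_comm z]
    ring
  have hden' : ‖1 + conj l * z‖ ^ 2 = 1 + 2 * u + ‖l‖ ^ 2 * ‖z‖ ^ 2 := by
    rw [Complex.sq_norm, normSq_add, normSq_mul, normSq_conj, normSq_one, normSq_eq_norm_sq l,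
      normSq_eq_norm_sq z, one_mul, conj_re]
    ring
  have hu : u ≤ ‖l‖ * ‖z‖ := by
    simpa only [norm_mul, norm_conj] using re_le_norm (conj l * z)
  -- the gap between the squares of the two sides is `2 (1 - ‖l‖²) (1 - ‖z‖²) (‖l‖ ‖z‖ - u)`
  have hgap : 0 ≤ (1 - ‖l‖ ^ 2) * (1 - ‖z‖ ^ 2) * (‖l‖ * ‖z‖ - u) := by
    have : 0 ≤ 1 - ‖l‖ ^ 2 := by nlinarith [norm_nonneg l]
    have : 0 ≤ 1 - ‖z‖ ^ 2 := by nlinarith [norm_nonneg z]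
    have : 0 ≤ ‖l‖ * ‖z‖ - u := by linarith
    positivity
  refine le_of_pow_le_pow_left₀ two_ne_zero (by positivity) ?_
  rw [mul_pow, mul_pow, hnum, hden']
  nlinarith [hgap]

theorem summable_norm_mul_pow_of_norm_lt {𝕜 : Type*} [NormedField 𝕜] {α : ℕ → 𝕜} {z w : 𝕜}
    (h : Summable fun k => α k * z ^ k) (hwz : ‖w‖ < ‖z‖) :
    Summable fun k => ‖α k * w ^ k‖ := by
  have hz : 0 < ‖z‖ := (norm_nonneg w).trans_lt hwz
  have hgeom : Summable fun k : ℕ => (‖w‖ / ‖z‖) ^ k :=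
    summable_geometric_of_lt_one (by positivity) ((div_lt_one hz).2 hwz)
  refine summable_of_isBigO_nat hgeom ?_
  have hbdd : (fun k => ‖α k * z ^ k‖) =O[atTop] fun _ => (1 : ℝ) :=
    h.tendsto_atTop_zero.norm.isBigO_one ℝ
  refine ((hbdd.mul (Asymptotics.isBigO_refl (fun k : ℕ => (‖w‖ / ‖z‖) ^ k) atTop)).congr_left
    fun k => ?_).congr_right fun k => one_mul _
  rw [norm_mul, norm_mul, norm_pow, norm_pow, div_pow, mul_assoc, mul_div_cancel₀ _ (by positivity)]

theorem sum_range_sq_norm_eq_circleAverage (c : ℕ → ℂ) (N : ℕ) :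
    ∑ k ∈ Finset.range N, ‖c k‖ ^ 2 =
      Real.circleAverage (fun w => ‖∑ k ∈ Finset.range N, c k * w ^ k‖ ^ 2) 0 1 := by
  set p : ℂ[X] := ∑ k ∈ Finset.range N, monomial k (c k)
  have hcoeff (k : ℕ) : p.coeff k = if k ∈ Finset.range N then c k else 0 := by
    simp [p, finsetSum_coeff, coeff_monomial]
  have heval (w : ℂ) : p.eval w = ∑ k ∈ Finset.range N, c k * w ^ k := by
    simp [p, eval_finsetSum]
  have hsupp : p.support ⊆ Finset.range N := fun k hk => by
    by_contra h
    simp [mem_support_iff, hcoeff, h] at hk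
  simp_rw [← heval, ← p.sum_sq_norm_coeff_eq_circleAverage]
  calc ∑ k ∈ Finset.range N, ‖c k‖ ^ 2 = ∑ k ∈ Finset.range N, ‖p.coeff k‖ ^ 2 :=
        Finset.sum_congr rfl fun k hk => by rw [hcoeff, if_pos hk]
    _ = ∑ k ∈ p.support, ‖p.coeff k‖ ^ 2 :=
        (Finset.sum_subset hsupp fun k _ hk => by simp [notMem_support_iff.1 hk]).symm

theorem norm_tsum_mul_pow_sub_sum_range_le {c : ℕ → ℂ} (hc : Summable fun k => ‖c k‖) {w : ℂ}
    (hw : ‖w‖ = 1) (N : ℕ) :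
    ‖∑' k, c k * w ^ k - ∑ k ∈ Finset.range N, c k * w ^ k‖ ≤ ∑' k, ‖c (k + N)‖ := by
  have hnorm (k : ℕ) : ‖c k * w ^ k‖ = ‖c k‖ := by rw [norm_mul, norm_pow, hw, one_pow, mul_one]
  have hsum : Summable fun k => c k * w ^ k := .of_norm (by simpa only [hnorm] using hc)
  rw [← hsum.sum_add_tsum_nat_add N, add_sub_cancel_left]
  refine (norm_tsum_le_tsum_norm ?_).trans_eq (tsum_congr fun k => hnorm _)
  simpa only [hnorm] using (summable_nat_add_iff N).2 hc

theorem tsum_sq_norm_le_of_norm_tsum_mul_pow_le {c : ℕ → ℂ} (hc : Summable fun k => ‖c k‖)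
    {M : ℝ} (hM : ∀ w : ℂ, ‖w‖ = 1 → ‖∑' k, c k * w ^ k‖ ≤ M) :
    ∑' k, ‖c k‖ ^ 2 ≤ M ^ 2 := by
  refine Real.tsum_le_of_sum_range_le (fun _ => sq_nonneg _) fun N => ?_
  have htail : Tendsto (fun n => (M + ∑' k, ‖c (k + n)‖) ^ 2) atTop (𝓝 (M ^ 2)) := by
    simpa using ((tendsto_sum_nat_add fun k => ‖c k‖).const_add M).pow 2
  refine ge_of_tendsto htail (eventually_atTop.2 ⟨N, fun n hn => ?_⟩)
  have hpartial : ∀ w ∈ Metric.sphere (0 : ℂ) |1|,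
      ‖∑ k ∈ Finset.range n, c k * w ^ k‖ ^ 2 ≤ (M + ∑' k, ‖c (k + n)‖) ^ 2 := fun w hw => by
    rw [abs_one, mem_sphere_zero_iff_norm] at hw
    refine pow_le_pow_left₀ (norm_nonneg _) ?_ 2
    calc ‖∑ k ∈ Finset.range n, c k * w ^ k‖
        ≤ ‖∑' k, c k * w ^ k‖ + ‖∑' k, c k * w ^ k - ∑ k ∈ Finset.range n, c k * w ^ k‖ :=
          norm_le_norm_add_norm_sub _ _
      _ ≤ M + ∑' k, ‖c (k + n)‖ := add_le_add (hM w hw) (norm_tsum_mul_pow_sub_sum_range_le hc hw n)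
  calc ∑ k ∈ Finset.range N, ‖c k‖ ^ 2 ≤ ∑ k ∈ Finset.range n, ‖c k‖ ^ 2 :=
        Finset.sum_le_sum_of_subset_of_nonneg (Finset.range_mono hn) fun _ _ _ => sq_nonneg _
    _ = Real.circleAverage (fun w => ‖∑ k ∈ Finset.range n, c k * w ^ k‖ ^ 2) 0 1 :=
        sum_range_sq_norm_eq_circleAverage c n
    _ ≤ (M + ∑' k, ‖c (k + n)‖) ^ 2 :=
        Real.circleAverage_mono_on_of_le_circle (ContinuousOn.circleIntegrable' (by fun_prop))
          hpartial

theorem stmt_6 (l : ℂ) (hl : ‖l‖ < 1) (m : ℕ) (α : ℕ → ℂ)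
    (hα : ∀ z : ℂ, ‖z‖ < 1 →
      HasSum (fun k : ℕ => α k * z ^ k) (((z + l) / (1 + (starRingEnd ℂ) l * z)) ^ m))
    (a : ℝ) (ha : 0 < a) :
    ∑' k : ℕ, (‖α k‖) ^ 2 * Real.exp (-2 * a * k) ≤
      ((‖l‖ + Real.exp (-2 * a)) / (1 + Real.exp (-2 * a) * ‖l‖)) ^ m := by
  set r := Real.exp (-a)
  have hr0 : 0 < r := Real.exp_pos _
  have hr1 : r < 1 := Real.exp_lt_one_iff.2 (by linarith)
  have hnorm_r : ‖(r : ℂ)‖ = r := by rw [norm_real, Real.norm_of_nonneg hr0.le]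
  have hsum : Summable fun k => ‖α k * (r : ℂ) ^ k‖ := by
    have hρ : ‖(((1 + r) / 2 : ℝ) : ℂ)‖ = (1 + r) / 2 := by
      rw [norm_real, Real.norm_of_nonneg (by positivity)]
    exact summable_norm_mul_pow_of_norm_lt (hα _ (by rw [hρ]; linarith)).summable
      (by rw [hρ, hnorm_r]; linarith)
  have hbound (w : ℂ) (hw : ‖w‖ = 1) :
      ‖∑' k, α k * (r : ℂ) ^ k * w ^ k‖ ≤ ((‖l‖ + r) / (1 + ‖l‖ * r)) ^ m := by
    have hrw : ‖(r : ℂ) * w‖ = r := by rw [norm_mul, hnorm_r, hw, mul_one]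
    simp_rw [mul_assoc, ← mul_pow]
    rw [(hα _ (by rw [hrw]; exact hr1)).tsum_eq, norm_pow]
    gcongr
    have hB := norm_add_div_one_add_conj_mul_le hl.le (z := r * w) (by rw [hrw]; exact hr1.le)
    rwa [hrw] at hB
  have hcoeff (k : ℕ) : ‖α k‖ ^ 2 * Real.exp (-2 * a * k) = ‖α k * (r : ℂ) ^ k‖ ^ 2 := by
    rw [norm_mul, norm_pow, hnorm_r, mul_pow, ← pow_mul, ← Real.exp_nat_mul]
    congr 2
    push_cast
    ring
  have hexp : Real.exp (-2 * a) = r ^ 2 := by rw [← Real.exp_nat_mul]; ring_nf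
  simp_rw [hcoeff, hexp]
  calc ∑' k, ‖α k * (r : ℂ) ^ k‖ ^ 2 ≤ (((‖l‖ + r) / (1 + ‖l‖ * r)) ^ m) ^ 2 :=
        tsum_sq_norm_le_of_norm_tsum_mul_pow_le hsum hbound
    _ = (((‖l‖ + r) / (1 + ‖l‖ * r)) ^ 2) ^ m := pow_right_comm _ m 2
    _ ≤ ((‖l‖ + r ^ 2) / (1 + r ^ 2 * ‖l‖)) ^ m := by
        gcongr
        exact add_div_one_add_mul_sq_le (norm_nonneg l) hl.le hr0.le hr1.le
end

section
/- Let φ > 1 and define deg_φ as: deg_φ(m,n) = |m| + φ^{-1}|n| if mn ≥ 0 and -|m| - φ|n| if mn < 0. Then for all integers m, n with m ≠ 0 and all natural numbers k, deg_φ(n + sign(m)·k, m) - deg_φ(n, m) ≥ k. -/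
noncomputable def degphi (φ : ℝ) (m n : ℤ) : ℝ :=
  if 0 ≤ m * n then (|m| : ℝ) + φ⁻¹ * |n| else -(|m| : ℝ) - φ * |n|

theorem stmt_11 (φ : ℝ) (hφ : 1 < φ) (m n : ℤ) (hm : m ≠ 0) (k : ℕ) :
    degphi φ (n + (if 0 ≤ m then 1 else -1) * k) m - degphi φ n m ≥ k := by
  have hφ0 : (0:ℝ) < φ := by linarith
  have hφi : (0:ℝ) < φ⁻¹ := by positivity
  have hmr : (1:ℝ) ≤ |(m:ℝ)| := by
    rw [← Int.cast_abs]
    exact_mod_cast Int.one_le_abs hm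
  by_cases hm0 : 0 ≤ m
  · have hmp : 0 < m := lt_of_le_of_ne hm0 (Ne.symm hm)
    simp only [if_pos hm0, one_mul]
    unfold degphi
    split_ifs with h1 h2 h2
    · have hn : 0 ≤ n := by nlinarith
      have hnk : 0 ≤ n + (k:ℤ) := by omega
      push_cast
      rw [abs_of_nonneg (show (0:ℝ) ≤ (n:ℝ) + k by exact_mod_cast hnk),
        abs_of_nonneg (show (0:ℝ) ≤ (n:ℝ) by exact_mod_cast hn)]
      linarith
    · have hn : n < 0 := by nlinarith
      have hnk : 0 ≤ n + (k:ℤ) := by nlinarith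
      push_cast
      rw [abs_of_nonneg (show (0:ℝ) ≤ (n:ℝ) + k by exact_mod_cast hnk),
        abs_of_neg (show (n:ℝ) < 0 by exact_mod_cast hn)]
      nlinarith [mul_nonneg hφi.le (by linarith : (0:ℝ) ≤ |(m:ℝ)|),
        mul_nonneg hφ0.le (by linarith : (0:ℝ) ≤ |(m:ℝ)|)]
    · exfalso
      have hn : 0 ≤ n := by nlinarith
      have : 0 ≤ (n + (k:ℤ)) * m := by positivity
      exact h1 this
    · have hnk : n + (k:ℤ) < 0 := by nlinarith
      have hn : n < 0 := by omega
      push_cast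
      rw [abs_of_neg (show (n:ℝ) + k < 0 by exact_mod_cast hnk),
        abs_of_neg (show (n:ℝ) < 0 by exact_mod_cast hn)]
      linarith
  · have hmn : m < 0 := by omega
    simp only [if_neg hm0, neg_one_mul]
    unfold degphi
    split_ifs with h1 h2 h2
    · have hn : n ≤ 0 := by nlinarith
      have hnk : n + -(k:ℤ) ≤ 0 := by omega
      push_cast
      rw [abs_of_nonpos (show (n:ℝ) + -k ≤ 0 by exact_mod_cast hnk),
        abs_of_nonpos (show (n:ℝ) ≤ 0 by exact_mod_cast hn)]
      linarith
    · have hn : 0 < n := by nlinarith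
      have hnk : n + -(k:ℤ) ≤ 0 := by nlinarith
      push_cast
      rw [abs_of_nonpos (show (n:ℝ) + -k ≤ 0 by exact_mod_cast hnk),
        abs_of_pos (show (0:ℝ) < (n:ℝ) by exact_mod_cast hn)]
      nlinarith [mul_nonneg hφi.le (by linarith : (0:ℝ) ≤ |(m:ℝ)|),
        mul_nonneg hφ0.le (by linarith : (0:ℝ) ≤ |(m:ℝ)|)]
    · exfalso
      have hn : n ≤ 0 := by nlinarith
      apply h1
      nlinarith [mul_nonneg (show (0:ℤ) ≤ -(n + -(k:ℤ)) by omega) (show (0:ℤ) ≤ -m by omega)]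
    · have hnk : 0 < n + -(k:ℤ) := by nlinarith
      have hn : 0 < n := by omega
      push_cast
      rw [abs_of_pos (show (0:ℝ) < (n:ℝ) + -k by exact_mod_cast hnk),
        abs_of_pos (show (0:ℝ) < (n:ℝ) by exact_mod_cast hn)]
      linarith
end

section
/- Let a > 0, λ ∈ ℂ with |λ| < 1, and set M = (|λ| + e^{-2a})/(1 + e^{-2a}|λ|) and δ = min(-½·log M, a). Then δ > 0, and for all integers m, n: e^{-2a|m|} · M^{|m+n|} ≤ e^{-δ(|m|+|n|)}. -/
section

open Real

lemma add_div_one_add_mul_mem_Ioo {x q : ℝ} (hx0 : 0 ≤ x) (hx1 : x < 1) (hq0 : 0 < q)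
    (hq1 : q < 1) : (x + q) / (1 + q * x) ∈ Set.Ioo 0 1 := by
  have hden : 0 < 1 + q * x := by positivity
  refine ⟨by positivity, (div_lt_one hden).mpr ?_⟩
  nlinarith [mul_pos (sub_pos.mpr hx1) (sub_pos.mpr hq1)]

lemma le_exp_of_le_neg_half_log {M δ : ℝ} (hM : 0 < M) (hδ : δ ≤ -(1 / 2) * log M) :
    M ≤ exp (-2 * δ) := by
  rw [← exp_log hM]
  exact exp_le_exp.mpr (by linarith)

lemma abs_le_abs_add_natAbs_add (m n : ℤ) : |(n : ℝ)| ≤ |(m : ℝ)| + (m + n).natAbs := by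
  rw [Nat.cast_natAbs, Int.cast_abs, Int.cast_add]
  calc |(n : ℝ)| = |-(m : ℝ) + (m + n)| := by ring_nf
    _ ≤ |(m : ℝ)| + |(m : ℝ) + n| := by simpa only [abs_neg] using abs_add_le (-(m : ℝ)) (m + n)

-- Both factors are dominated by `exp (-2δ ·)`, and `|m| + |n| ≤ 2 (|m| + |m + n|)`.
lemma exp_mul_pow_natAbs_le {a δ M : ℝ} (hδ : 0 ≤ δ) (hδa : δ ≤ a) (hM0 : 0 ≤ M)
    (hM : M ≤ exp (-2 * δ)) (m n : ℤ) :
    exp (-2 * a * |(m : ℝ)|) * M ^ (m + n).natAbs ≤ exp (-δ * (|(m : ℝ)| + |(n : ℝ)|)) := by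
  set k := (m + n).natAbs
  have hm : exp (-2 * a * |(m : ℝ)|) ≤ exp (-2 * δ * |(m : ℝ)|) :=
    exp_le_exp.mpr (by nlinarith [abs_nonneg (m : ℝ)])
  have hk : M ^ k ≤ exp (-2 * δ * k) := by
    rw [mul_comm, exp_nat_mul]
    exact pow_le_pow_left₀ hM0 hM k
  have hn := abs_le_abs_add_natAbs_add m n
  calc exp (-2 * a * |(m : ℝ)|) * M ^ k ≤ exp (-2 * δ * |(m : ℝ)|) * exp (-2 * δ * k) :=
        mul_le_mul hm hk (by positivity) (exp_pos _).le
    _ = exp (-2 * δ * (|(m : ℝ)| + k)) := by rw [← exp_add]; ring_nf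
    _ ≤ exp (-δ * (|(m : ℝ)| + |(n : ℝ)|)) :=
        exp_le_exp.mpr (by nlinarith [abs_nonneg (m : ℝ), Nat.cast_nonneg (α := ℝ) k])

end

theorem stmt_19 (a : ℝ) (ha : 0 < a) (l : ℂ) (hl : ‖l‖ < 1) :
    let M : ℝ := (‖l‖ + Real.exp (-2 * a)) / (1 + Real.exp (-2 * a) * ‖l‖)
    let δ : ℝ := min (-(1 / 2) * Real.log M) a
    0 < δ ∧ ∀ m n : ℤ,
      Real.exp (-2 * a * |m|) * M ^ (m + n).natAbs ≤ Real.exp (-δ * (|m| + |n|)) := by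
  intro M δ
  obtain ⟨hM0, hM1⟩ : M ∈ Set.Ioo 0 1 :=
    add_div_one_add_mul_mem_Ioo (norm_nonneg l) hl (Real.exp_pos _)
      (Real.exp_lt_one_iff.mpr (by linarith))
  have hδ : 0 < δ := lt_min (by linarith [Real.log_neg hM0 hM1]) ha
  refine ⟨hδ, fun m n => ?_⟩
  push_cast
  exact exp_mul_pow_natAbs_le hδ.le (min_le_right _ _) hM0.le
    (le_exp_of_le_neg_half_log hM0 (min_le_left _ _)) m n
end
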